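/- Suppose the SDS X_n^x = Ψ_n(X_{n−1}^x) on [0,∞) is generated by i.i.d. Lipschitz maps with Lipschitz constant A(Ψ_n) and A(Ψ)x ≤ Ψ(x) for x ≥ 0. If X_n^y/(A₁⋯A_n) → ∞ a.s. for every y, then the SDS is locally contractive: for all y, y′ ≥ 0 and every compact K ⊂ [0,∞), lim_{n→∞} 1_K(X_n^y)·|X_n^y − X_n^{y′}| = 0 almost surely. -/

import Mathlib

open MeasureTheory Filter Classical
noncomputable section
open scoped Classical

/-- The iterated process `X_0 = x`, `X_{n+1} = Ψ_{n+1}(X_n)` (with `Ψ` indexed from `0`). -/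
def iterSDS {Ω : Type*} (Ψ : ℕ → Ω → ℝ → ℝ) (x : ℝ) (ω : Ω) : ℕ → ℝ
  | 0 => x
  | n + 1 => Ψ n ω (iterSDS Ψ x ω n)

/-! On `{X_n ∈ K}` the product `A₁⋯A_n = X_n / (X_n / (A₁⋯A_n))` is at most `sup K` divided by a
quantity tending to infinity, and the Lipschitz bounds give
`|X_n^y - X_n^{y'}| ≤ |y - y'| A₁⋯A_n`. -/

open Topology

theorem tendsto_ite_mem_of_tendsto_div_atTop {x p : ℕ → ℝ} {K : Set ℝ} (hK : BddAbove K)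
    (hp : ∀ n, 0 < p n) (h : Tendsto (fun n => x n / p n) atTop atTop) :
    Tendsto (fun n => if x n ∈ K then p n else 0) atTop (𝓝 0) := by
  obtain ⟨C, hC⟩ := hK
  have hlim : Tendsto (fun n => max C 0 * (x n / p n)⁻¹) atTop (𝓝 0) := by
    simpa using h.inv_tendsto_atTop.const_mul (max C 0)
  refine squeeze_zero' (Eventually.of_forall fun n => ?_) ?_ hlim
  · split_ifs
    exacts [(hp n).le, le_rfl]
  filter_upwards [h.eventually_gt_atTop 0] with n hr
  have hx : 0 < x n := by simpa [div_pos_iff_of_pos_right (hp n)] using hr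
  split_ifs with hxK
  · calc p n = x n * (x n / p n)⁻¹ := by field_simp
      _ ≤ max C 0 * (x n / p n)⁻¹ := by
        gcongr
        exact (hC hxK).trans (le_max_left C 0)
  · positivity

section iterSDS

variable {Ω : Type*} {Ψ : ℕ → Ω → ℝ → ℝ} {ω : Ω}

theorem iterSDS_nonneg (hΨ : ∀ n x, 0 ≤ x → 0 ≤ Ψ n ω x) {x : ℝ} (hx : 0 ≤ x) :
    ∀ n, 0 ≤ iterSDS Ψ x ω n
  | 0 => hx
  | n + 1 => hΨ n _ (iterSDS_nonneg hΨ hx n)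

theorem abs_iterSDS_sub_le_mul_prod {A : ℕ → Ω → ℝ} (hΨ : ∀ n x, 0 ≤ x → 0 ≤ Ψ n ω x)
    (hA : ∀ n, 0 ≤ A n ω)
    (hLip : ∀ n x y, 0 ≤ x → 0 ≤ y → |Ψ n ω x - Ψ n ω y| ≤ A n ω * |x - y|)
    {y y' : ℝ} (hy : 0 ≤ y) (hy' : 0 ≤ y') :
    ∀ n, |iterSDS Ψ y ω n - iterSDS Ψ y' ω n| ≤ |y - y'| * ∏ i ∈ Finset.range n, A i ω
  | 0 => by simp [iterSDS]
  | n + 1 =>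
    calc |iterSDS Ψ y ω (n + 1) - iterSDS Ψ y' ω (n + 1)|
        ≤ A n ω * |iterSDS Ψ y ω n - iterSDS Ψ y' ω n| :=
          hLip n _ _ (iterSDS_nonneg hΨ hy n) (iterSDS_nonneg hΨ hy' n)
      _ ≤ A n ω * (|y - y'| * ∏ i ∈ Finset.range n, A i ω) :=
          mul_le_mul_of_nonneg_left (abs_iterSDS_sub_le_mul_prod hΨ hA hLip hy hy' n) (hA n)
      _ = |y - y'| * ∏ i ∈ Finset.range (n + 1), A i ω := by
          rw [Finset.prod_range_succ]; ring

end iterSDS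

theorem local_contractivity_of_normalized_divergence_general {Ω : Type*} [MeasurableSpace Ω]
    (P : Measure Ω)
    (Ψ : ℕ → Ω → ℝ → ℝ) (A : ℕ → Ω → ℝ)
    (hAL : ∀ᵐ ω ∂P, ∀ n : ℕ,
      0 < A n ω ∧
      (∀ x : ℝ, 0 ≤ x → A n ω * x ≤ Ψ n ω x) ∧
      (∀ x y : ℝ, 0 ≤ x → 0 ≤ y → |Ψ n ω x - Ψ n ω y| ≤ A n ω * |x - y|))
    (hdiv : ∀ y : ℝ, 0 ≤ y → ∀ᵐ ω ∂P,
      Tendsto (fun n => iterSDS Ψ y ω n / ∏ i ∈ Finset.range n, A i ω)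
        atTop atTop) :
    ∀ y y' : ℝ, 0 ≤ y → 0 ≤ y' → ∀ K : Set ℝ, IsCompact K → K ⊆ Set.Ici 0 →
      ∀ᵐ ω ∂P,
        Tendsto (fun n =>
            if iterSDS Ψ y ω n ∈ K then |iterSDS Ψ y ω n - iterSDS Ψ y' ω n| else 0)
          atTop (nhds 0) := by
  intro y y' hy hy' K hK _
  filter_upwards [hAL, hdiv y hy] with ω hω hdivω
  have hA : ∀ n, 0 < A n ω := fun n => (hω n).1
  have hΨ : ∀ n x, 0 ≤ x → 0 ≤ Ψ n ω x := fun n x hx =>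
    (mul_nonneg (hA n).le hx).trans ((hω n).2.1 x hx)
  have hprod : ∀ n, 0 < ∏ i ∈ Finset.range n, A i ω := fun n =>
    Finset.prod_pos fun i _ => hA i
  have hdist := abs_iterSDS_sub_le_mul_prod hΨ (fun n => (hA n).le) (fun n => (hω n).2.2) hy hy'
  have hsmall := (tendsto_ite_mem_of_tendsto_div_atTop hK.bddAbove hprod hdivω).const_mul |y - y'|
  rw [mul_zero] at hsmall
  refine squeeze_zero (fun n => ?_) (fun n => ?_) hsmall
  · split_ifs <;> positivity
  · split_ifs
    exacts [hdist n, le_of_eq (mul_zero _).symm]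

theorem local_contractivity_of_normalized_divergence {Ω : Type*} [MeasurableSpace Ω]
    (P : Measure Ω) [IsProbabilityMeasure P]
    (Ψ : ℕ → Ω → ℝ → ℝ) (A : ℕ → Ω → ℝ)
    (hAL : ∀ᵐ ω ∂P, ∀ n : ℕ,
      0 < A n ω ∧
      (∀ x : ℝ, 0 ≤ x → A n ω * x ≤ Ψ n ω x) ∧
      (∀ x y : ℝ, 0 ≤ x → 0 ≤ y → |Ψ n ω x - Ψ n ω y| ≤ A n ω * |x - y|))
    (hdiv : ∀ y : ℝ, 0 ≤ y → ∀ᵐ ω ∂P,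
      Tendsto (fun n => iterSDS Ψ y ω n / ∏ i ∈ Finset.range n, A i ω)
        atTop atTop) :
    ∀ y y' : ℝ, 0 ≤ y → 0 ≤ y' → ∀ K : Set ℝ, IsCompact K → K ⊆ Set.Ici 0 →
      ∀ᵐ ω ∂P,
        Tendsto (fun n =>
            if iterSDS Ψ y ω n ∈ K then |iterSDS Ψ y ω n - iterSDS Ψ y' ω n| else 0)
          atTop (nhds 0) :=
  local_contractivity_of_normalized_divergence_general P Ψ A hAL hdiv
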